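/- arXiv:1403.6016 — 3 statements merged into one kernel-verified Lean document; each statement's English description precedes it below -/
import Mathlib

section
/- Let ||·||_{D_1} and ||·||_{D_2} be D-norms on R^d with generators Z^{(1)} and Z^{(2)} defined on a common probability space. Then for every x ∈ R^d, ||x||_{D_1} ≤ ||x||_{D_2} + ||x||_∞ · E(max_{1≤i≤d} |Z_i^{(1)} − Z_i^{(2)}|). Consequently sup_{||x||_∞ ≤ r} | ||x||_{D_1} − ||x||_{D_2} | ≤ r · E(||Z^{(1)} − Z^{(2)}||_1) for all r ≥ 0. -/
/-!
Pointwise, `|xᵢ| Z¹ᵢ ≤ |xᵢ| Z²ᵢ + |xᵢ| |Z¹ᵢ − Z²ᵢ|` for every `i`, and taking the maximum over `i`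
on both sides gives `max |xᵢ| Z¹ᵢ ≤ max |xᵢ| Z²ᵢ + ‖x‖_∞ max |Z¹ᵢ − Z²ᵢ|`; integrating yields the
first inequality. Exchanging the roles of the generators bounds the difference of the two D-norms
in absolute value, and the maximum of `|Z¹ᵢ − Z²ᵢ|` is at most their sum.
-/

open MeasureTheory

section Finite

variable {ι : Type*} [Fintype ι]

lemma ciSup_le_sum_of_nonneg {f : ι → ℝ} (hf : ∀ i, 0 ≤ f i) : ⨆ i, f i ≤ ∑ i, f i :=
  Real.iSup_le (fun i => Finset.single_le_sum (fun j _ => hf j) (Finset.mem_univ i))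
    (Finset.sum_nonneg fun i _ => hf i)

variable [Nonempty ι]

lemma abs_ciSup_le_sum_abs (f : ι → ℝ) : |⨆ i, f i| ≤ ∑ i, |f i| := by
  have hsum : ⨆ i, |f i| ≤ ∑ i, |f i| := ciSup_le_sum_of_nonneg fun i => abs_nonneg (f i)
  obtain ⟨i₀⟩ := ‹Nonempty ι›
  refine abs_le.2 ⟨?_, ?_⟩
  · calc -∑ i, |f i| ≤ -|f i₀| :=
          neg_le_neg (Finset.single_le_sum (fun j _ => abs_nonneg (f j)) (Finset.mem_univ i₀))
      _ ≤ f i₀ := neg_abs_le _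
      _ ≤ ⨆ i, f i := le_ciSup (Finite.bddAbove_range f) i₀
  · exact (ciSup_mono (Finite.bddAbove_range _) fun i => le_abs_self (f i)).trans hsum

lemma ciSup_abs_mul_le_add_ciSup_abs_mul (x a b : ι → ℝ) :
    ⨆ i, |x i| * a i ≤ (⨆ i, |x i| * b i) + (⨆ i, |x i|) * ⨆ i, |a i - b i| := by
  refine ciSup_le fun i => ?_
  have hx : |x i| ≤ ⨆ j, |x j| := le_ciSup (Finite.bddAbove_range fun j => |x j|) i
  have hab : |a i - b i| ≤ ⨆ j, |a j - b j| :=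
    le_ciSup (Finite.bddAbove_range fun j => |a j - b j|) i
  calc |x i| * a i ≤ |x i| * b i + |x i| * |a i - b i| := by
        rw [← mul_add]
        exact mul_le_mul_of_nonneg_left (by linarith [le_abs_self (a i - b i)]) (abs_nonneg _)
    _ ≤ (⨆ j, |x j| * b j) + (⨆ j, |x j|) * ⨆ j, |a j - b j| :=
        add_le_add (le_ciSup (Finite.bddAbove_range fun j => |x j| * b j) i)
          (mul_le_mul hx hab (abs_nonneg _) ((abs_nonneg _).trans hx))

end Finite

section Integral

variable {ι Ω : Type*} [Fintype ι] [Nonempty ι] [MeasurableSpace Ω] {μ : Measure Ω}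

lemma MeasureTheory.Integrable.ciSup {f : ι → Ω → ℝ} (hf : ∀ i, Integrable (f i) μ) :
    Integrable (fun ω => ⨆ i, f i ω) μ :=
  (integrable_finsetSum Finset.univ fun i _ => (hf i).abs).mono'
    (AEMeasurable.iSup fun i => (hf i).aemeasurable).aestronglyMeasurable
    (Filter.Eventually.of_forall fun ω => abs_ciSup_le_sum_abs fun i => f i ω)

variable {Z₁ Z₂ : Ω → ι → ℝ}

lemma integral_ciSup_abs_mul_le (hZ₁ : ∀ i, Integrable (Z₁ · i) μ)
    (hZ₂ : ∀ i, Integrable (Z₂ · i) μ) (x : ι → ℝ) :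
    ∫ ω, ⨆ i, |x i| * Z₁ ω i ∂μ ≤
      (∫ ω, ⨆ i, |x i| * Z₂ ω i ∂μ) + (⨆ i, |x i|) * ∫ ω, ⨆ i, |Z₁ ω i - Z₂ ω i| ∂μ := by
  have hZ₂x : Integrable (fun ω => ⨆ i, |x i| * Z₂ ω i) μ :=
    Integrable.ciSup fun i => (hZ₂ i).const_mul _
  have hdiff : Integrable (fun ω => (⨆ i, |x i|) * ⨆ i, |Z₁ ω i - Z₂ ω i|) μ :=
    (Integrable.ciSup fun i => ((hZ₁ i).sub (hZ₂ i)).abs).const_mul _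
  rw [← integral_const_mul, ← integral_add hZ₂x hdiff]
  exact integral_mono (Integrable.ciSup fun i => (hZ₁ i).const_mul _) (hZ₂x.add hdiff)
    fun ω => ciSup_abs_mul_le_add_ciSup_abs_mul x (Z₁ ω) (Z₂ ω)

lemma abs_integral_ciSup_abs_mul_sub_le (hZ₁ : ∀ i, Integrable (Z₁ · i) μ)
    (hZ₂ : ∀ i, Integrable (Z₂ · i) μ) (x : ι → ℝ) :
    |(∫ ω, ⨆ i, |x i| * Z₁ ω i ∂μ) - ∫ ω, ⨆ i, |x i| * Z₂ ω i ∂μ| ≤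
      (⨆ i, |x i|) * ∫ ω, ⨆ i, |Z₁ ω i - Z₂ ω i| ∂μ := by
  have h₁₂ := integral_ciSup_abs_mul_le hZ₁ hZ₂ x
  have h₂₁ := integral_ciSup_abs_mul_le hZ₂ hZ₁ x
  simp only [abs_sub_comm (Z₂ _ _)] at h₂₁
  exact abs_sub_le_iff.2 ⟨by linarith, by linarith⟩

lemma integral_ciSup_abs_sub_le_integral_sum (hZ₁ : ∀ i, Integrable (Z₁ · i) μ)
    (hZ₂ : ∀ i, Integrable (Z₂ · i) μ) :
    ∫ ω, ⨆ i, |Z₁ ω i - Z₂ ω i| ∂μ ≤ ∫ ω, ∑ i, |Z₁ ω i - Z₂ ω i| ∂μ :=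
  integral_mono (Integrable.ciSup fun i => ((hZ₁ i).sub (hZ₂ i)).abs)
    (integrable_finsetSum _ fun i _ => ((hZ₁ i).sub (hZ₂ i)).abs)
    fun _ => ciSup_le_sum_of_nonneg fun _ => abs_nonneg _

end Integral

theorem D_norm_lipschitz_general (d : ℕ) (hd : 0 < d)
    {Ω : Type*} [MeasurableSpace Ω] (μ : Measure Ω)
    (Z₁ Z₂ : Ω → Fin d → ℝ)
    (hint₁ : ∀ i, Integrable (fun ω => Z₁ ω i) μ)
    (hint₂ : ∀ i, Integrable (fun ω => Z₂ ω i) μ) :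
    (∀ x : Fin d → ℝ,
      ∫ ω, ⨆ i, |x i| * Z₁ ω i ∂μ ≤ (∫ ω, ⨆ i, |x i| * Z₂ ω i ∂μ) +
        (⨆ i, |x i|) * ∫ ω, ⨆ i, |Z₁ ω i - Z₂ ω i| ∂μ) ∧
    ∀ r : ℝ, 0 ≤ r → ∀ x : Fin d → ℝ, (⨆ i, |x i|) ≤ r →
      |(∫ ω, ⨆ i, |x i| * Z₁ ω i ∂μ) - ∫ ω, ⨆ i, |x i| * Z₂ ω i ∂μ| ≤
        r * ∫ ω, ∑ i, |Z₁ ω i - Z₂ ω i| ∂μ := by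
  have : Nonempty (Fin d) := ⟨⟨0, hd⟩⟩
  refine ⟨integral_ciSup_abs_mul_le hint₁ hint₂, fun r hr x hx => ?_⟩
  have hI : 0 ≤ ∫ ω, ⨆ i, |Z₁ ω i - Z₂ ω i| ∂μ :=
    integral_nonneg fun ω => Real.iSup_nonneg fun i => abs_nonneg _
  exact (abs_integral_ciSup_abs_mul_sub_le hint₁ hint₂ x).trans
    (mul_le_mul hx (integral_ciSup_abs_sub_le_integral_sum hint₁ hint₂) hI hr)

/-- Comparison of two D-norms via their generators on a common probability
space: `‖x‖_{D₁} ≤ ‖x‖_{D₂} + ‖x‖_∞ E(max_i |Z¹_i − Z²_i|)`, and consequently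
`sup_{‖x‖_∞ ≤ r} |‖x‖_{D₁} − ‖x‖_{D₂}| ≤ r · E(‖Z¹ − Z²‖₁)`. -/
theorem D_norm_lipschitz (d : ℕ) (hd : 0 < d)
    {Ω : Type*} [MeasurableSpace Ω] (μ : Measure Ω) [IsProbabilityMeasure μ]
    (Z₁ Z₂ : Ω → Fin d → ℝ)
    (hmeas₁ : ∀ i, Measurable fun ω => Z₁ ω i)
    (hmeas₂ : ∀ i, Measurable fun ω => Z₂ ω i)
    (hpos₁ : ∀ ω i, 0 ≤ Z₁ ω i) (hpos₂ : ∀ ω i, 0 ≤ Z₂ ω i)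
    (hint₁ : ∀ i, Integrable (fun ω => Z₁ ω i) μ)
    (hint₂ : ∀ i, Integrable (fun ω => Z₂ ω i) μ)
    (hexp₁ : ∀ i, ∫ ω, Z₁ ω i ∂μ = 1) (hexp₂ : ∀ i, ∫ ω, Z₂ ω i ∂μ = 1) :
    (∀ x : Fin d → ℝ,
      ∫ ω, ⨆ i, |x i| * Z₁ ω i ∂μ ≤ (∫ ω, ⨆ i, |x i| * Z₂ ω i ∂μ) +
        (⨆ i, |x i|) * ∫ ω, ⨆ i, |Z₁ ω i - Z₂ ω i| ∂μ) ∧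
    ∀ r : ℝ, 0 ≤ r → ∀ x : Fin d → ℝ, (⨆ i, |x i|) ≤ r →
      |(∫ ω, ⨆ i, |x i| * Z₁ ω i ∂μ) - ∫ ω, ⨆ i, |x i| * Z₂ ω i ∂μ| ≤
        r * ∫ ω, ∑ i, |Z₁ ω i - Z₂ ω i| ∂μ :=
  D_norm_lipschitz_general d hd μ Z₁ Z₂ hint₁ hint₂
end

section
/- For d = 2 and α > 0, the Dirichlet D-norm generator constant satisfies m(α) := ||(1,1)||_{D(α)} = 1 + Γ(α + 1/2)/(√π · Γ(α+1)) = 1 + 1/(α·B(α, 1/2)), where B denotes the beta function. -/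
open MeasureTheory ProbabilityTheory Real Set
open scoped ENNReal

/-!
For `V₂ ≥ 0` one has `max V₁ V₂ = V₂ + (V₁ - V₂)⁺`, and `E V₂ = α`. In `E (V₁ - V₂)⁺` write
`V₂ = s u` with `u ∈ (0, 1]` given `V₁ = s`; after exchanging the order of integration the
integral over `s` is a Gamma integral, leaving `Γ(2α+1)/Γ(α)² ∫₀¹ u^(α-1) (1-u) (1+u)^(-2α-1) du`.
This integrand has the elementary primitive `u^α (1+u)^(-2α) / α`, and Legendre's duplication
formula turns the resulting `Γ(2α+1) 2^(-2α) / (α Γ(α)²)` into `Γ(α+1/2) / (√π Γ(α))`, which is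
`1 / B(α, 1/2)`.
-/

lemma integral_rpow_mul_one_sub_rpow_eq_beta {a b : ℝ} (ha : 0 < a) (hb : 0 < b) :
    ∫ u in (0:ℝ)..1, u ^ (a - 1) * (1 - u) ^ (b - 1) = beta a b := by
  have hB := Complex.Gamma_mul_Gamma_eq_betaIntegral (s := a) (t := b) (by simpa) (by simpa)
  have hreal :
      Complex.betaIntegral a b = ↑(∫ u in (0:ℝ)..1, u ^ (a - 1) * (1 - u) ^ (b - 1)) := by
    rw [Complex.betaIntegral, ← intervalIntegral.integral_ofReal]
    refine intervalIntegral.integral_congr fun u ⟨hu₀, hu₁⟩ => ?_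
    simp only [zero_le_one, inf_of_le_left, sup_of_le_right] at hu₀ hu₁
    simp [Complex.ofReal_cpow hu₀, Complex.ofReal_cpow (sub_nonneg.2 hu₁)]
  rw [← Complex.ofReal_add, Complex.Gamma_ofReal, Complex.Gamma_ofReal,
    Complex.Gamma_ofReal, hreal] at hB
  rw [beta, eq_div_iff (Gamma_pos_of_pos (add_pos ha hb)).ne']
  exact_mod_cast (mul_comm _ _).trans hB.symm

lemma Gamma_two_mul_add_one_mul_two_rpow {s : ℝ} (hs : s ≠ 0) :
    Gamma (2 * s + 1) * 2 ^ (-(2 * s)) * √π = s * Gamma s * Gamma (s + 1 / 2) := by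
  rw [mul_assoc _ (Gamma s), Gamma_mul_Gamma_add_half, Gamma_add_one (mul_ne_zero two_ne_zero hs),
    show (1 - 2 * s) = 1 + -(2 * s) by ring, rpow_add two_pos, rpow_one]
  ring

lemma hasDerivAt_rpow_mul_one_add_rpow {a u : ℝ} (ha : a ≠ 0) (hu : 0 < u) :
    HasDerivAt (fun x => x ^ a * (1 + x) ^ (-(2 * a)) / a)
      (u ^ (a - 1) * (1 - u) * (1 + u) ^ (-(2 * a + 1))) u := by
  have hu' : 0 < 1 + u := by linarith
  have h := ((hasDerivAt_rpow_const (p := a) (Or.inl hu.ne')).mul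
    (((hasDerivAt_id u).const_add 1).rpow_const (p := -(2 * a)) (Or.inl hu'.ne'))).div_const a
  refine h.congr_deriv ?_
  have e₁ : (1 + u) ^ (-(2 * a)) = (1 + u) ^ (-(2 * a + 1)) * (1 + u) := by
    rw [← rpow_add_one hu'.ne']; ring_nf
  have e₂ : u ^ a = u ^ (a - 1) * u := by
    rw [← rpow_add_one hu.ne']; ring_nf
  simp only [id, e₁, e₂, show -(2 * a) - 1 = -(2 * a + 1) by ring]
  field_simp
  ring

lemma lintegral_rpow_mul_one_sub_mul_one_add_rpow {a : ℝ} (ha : 0 < a) :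
    ∫⁻ u in Ioc 0 1, ENNReal.ofReal (u ^ (a - 1) * (1 - u) * (1 + u) ^ (-(2 * a + 1))) =
      ENNReal.ofReal (2 ^ (-(2 * a)) / a) := by
  have hcont : ContinuousOn (fun x : ℝ => x ^ a * (1 + x) ^ (-(2 * a)) / a) (Icc 0 1) := by
    refine ContinuousOn.div_const (ContinuousOn.mul ?_ ?_) a
    · exact continuousOn_id.rpow_const fun _ _ => Or.inr ha.le
    · exact (continuousOn_const.add continuousOn_id).rpow_const
        fun u hu => Or.inl (by linarith [hu.1] : (1 : ℝ) + u ≠ 0)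
  have hderiv : ∀ u ∈ Ioo (0 : ℝ) 1, HasDerivAt (fun x => x ^ a * (1 + x) ^ (-(2 * a)) / a)
      (u ^ (a - 1) * (1 - u) * (1 + u) ^ (-(2 * a + 1))) u :=
    fun u hu => hasDerivAt_rpow_mul_one_add_rpow ha.ne' hu.1
  have hnonneg : ∀ u ∈ Ioo (0 : ℝ) 1, 0 ≤ u ^ (a - 1) * (1 - u) * (1 + u) ^ (-(2 * a + 1)) :=
    fun u ⟨hu₀, hu₁⟩ => by have := sub_pos.2 hu₁; positivity
  have hint := intervalIntegral.integrableOn_deriv_of_nonneg hcont hderiv hnonneg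
  rw [← ofReal_integral_eq_lintegral_ofReal hint, ← intervalIntegral.integral_of_le zero_le_one,
    intervalIntegral.integral_eq_sub_of_hasDerivAt_of_le zero_le_one hcont hderiv
      ((intervalIntegrable_iff_integrableOn_Ioc_of_le zero_le_one).2 hint)]
  · norm_num [zero_rpow ha.ne']
  · exact ae_restrict_of_forall_mem measurableSet_Ioc fun u ⟨hu₀, hu₁⟩ => by
      have := sub_nonneg.2 hu₁; positivity

lemma lintegral_rpow_mul_exp_neg_mul_Ioi {a r : ℝ} (ha : 0 < a) (hr : 0 < r) :
    ∫⁻ x in Ioi 0, ENNReal.ofReal (x ^ (a - 1) * exp (-(r * x))) =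
      ENNReal.ofReal ((1 / r) ^ a * Gamma a) := by
  rw [← integral_rpow_mul_exp_neg_mul_Ioi ha hr, ofReal_integral_eq_lintegral_ofReal]
  · have h := integrableOn_rpow_mul_exp_neg_mul_rpow (by linarith : -1 < a - 1) one_pos hr
    simp only [rpow_one, neg_mul] at h
    exact h
  · exact ae_restrict_of_forall_mem measurableSet_Ioi fun x hx => by
      have : 0 < x := hx; positivity

lemma lintegral_gammaMeasure {a r : ℝ} {g : ℝ → ℝ≥0∞} (hg : Measurable g) :
    ∫⁻ x, g x ∂gammaMeasure a r =
      ∫⁻ x in Ioi 0, ENNReal.ofReal (r ^ a / Gamma a * x ^ (a - 1) * exp (-(r * x))) * g x := by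
  have hsupp : Function.support (gammaPDF a r * g) ⊆ Ici 0 := fun x hx => by
    by_contra hneg
    exact hx (by simp only [Pi.mul_apply, gammaPDF_of_neg (not_le.1 hneg), zero_mul])
  have hpdf : Measurable (gammaPDF a r) := (measurable_gammaPDFReal a r).ennreal_ofReal
  rw [gammaMeasure, lintegral_withDensity_eq_lintegral_mul _ hpdf hg,
    ← setLIntegral_eq_of_support_subset hsupp, setLIntegral_congr Ioi_ae_eq_Ici.symm]
  exact setLIntegral_congr_fun measurableSet_Ioi fun x hx => by
    rw [Pi.mul_apply, gammaPDF_of_nonneg (le_of_lt hx)]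

lemma lintegral_ofReal_gammaMeasure {a r : ℝ} (ha : 0 < a) (hr : 0 < r) :
    ∫⁻ x, ENNReal.ofReal x ∂gammaMeasure a r = ENNReal.ofReal (a / r) := by
  rw [lintegral_gammaMeasure ENNReal.measurable_ofReal]
  have hpt : ∀ x ∈ Ioi (0 : ℝ),
      ENNReal.ofReal (r ^ a / Gamma a * x ^ (a - 1) * exp (-(r * x))) * ENNReal.ofReal x =
        ENNReal.ofReal (r ^ a / Gamma a) * ENNReal.ofReal (x ^ (a + 1 - 1) * exp (-(r * x))) :=
    fun x (hx : 0 < x) => by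
      rw [← ENNReal.ofReal_mul (by positivity), ← ENNReal.ofReal_mul (by positivity),
        add_sub_cancel_right, rpow_sub_one hx.ne']
      field_simp
  rw [setLIntegral_congr_fun measurableSet_Ioi hpt, lintegral_const_mul' _ _ ENNReal.ofReal_ne_top,
    lintegral_rpow_mul_exp_neg_mul_Ioi (by linarith) hr, ← ENNReal.ofReal_mul (by positivity),
    Gamma_add_one ha.ne', rpow_add_one (by positivity), div_rpow zero_le_one hr.le, one_rpow]
  field_simp

lemma lintegral_ofReal_sub_gammaMeasure {a r s : ℝ} (hs : 0 < s) :
    ∫⁻ t, ENNReal.ofReal (s - t) ∂gammaMeasure a r =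
      ∫⁻ u in Ioc 0 1, ENNReal.ofReal
        (r ^ a * s ^ (a + 1) / Gamma a * (u ^ (a - 1) * (1 - u) * exp (-(r * s * u)))) := by
  set f : ℝ → ℝ≥0∞ := fun t =>
    ENNReal.ofReal (r ^ a / Gamma a * t ^ (a - 1) * exp (-(r * t))) * ENNReal.ofReal (s - t)
  have hvanish : EqOn f 0 (Ioi s) := fun t (ht : s < t) => by
    simp only [f, Pi.zero_apply, ENNReal.ofReal_of_nonpos (sub_nonpos.2 ht.le), mul_zero]
  have hsub : ∫⁻ t in Ioc 0 s, f t =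
      ∫⁻ u in Ioc 0 1, ENNReal.ofReal |s| * f (s * u) := by
    have h := lintegral_image_eq_lintegral_abs_deriv_mul measurableSet_Ioc
      (fun u _ => (hasDerivAt_const_mul s).hasDerivWithinAt)
      (mul_right_injective₀ hs.ne').injOn f (s := Ioc (0 : ℝ) 1)
    rwa [image_mul_left_Ioc hs, mul_zero, mul_one] at h
  rw [lintegral_gammaMeasure (by fun_prop), ← Ioc_union_Ioi_eq_Ioi hs.le,
    lintegral_union measurableSet_Ioi Ioc_disjoint_Ioi_same,
    setLIntegral_eq_zero measurableSet_Ioi hvanish, add_zero, hsub]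
  refine setLIntegral_congr_fun measurableSet_Ioc fun u ⟨hu₀, hu₁⟩ => ?_
  have hsu : 0 ≤ s - s * u := by nlinarith
  simp only [f]
  rw [← ENNReal.ofReal_mul' hsu, ← ENNReal.ofReal_mul (abs_nonneg s), abs_of_pos hs,
    mul_rpow hs.le hu₀.le, show a + 1 = a - 1 + 1 + 1 by ring, rpow_add_one hs.ne',
    rpow_add_one hs.ne', mul_assoc r s u]
  ring_nf

lemma lintegral_ofReal_sub_gammaMeasure_prod {a r : ℝ} (ha : 0 < a) (hr : 0 < r) :
    ∫⁻ z, ENNReal.ofReal (z.1 - z.2) ∂(gammaMeasure a r).prod (gammaMeasure a r) =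
      ENNReal.ofReal (Gamma (a + 1 / 2) / (r * √π * Gamma a)) := by
  set ν := gammaMeasure a r
  have : IsProbabilityMeasure ν := isProbabilityMeasure_gammaMeasure ha hr
  have hinner : ∀ s ∈ Ioi (0 : ℝ),
      ENNReal.ofReal (r ^ a / Gamma a * s ^ (a - 1) * exp (-(r * s))) *
          ∫⁻ t, ENNReal.ofReal (s - t) ∂ν =
        ∫⁻ u in Ioc 0 1, ENNReal.ofReal (r ^ (2 * a) / Gamma a ^ 2 * (u ^ (a - 1) * (1 - u)) *
          (s ^ (2 * a + 1 - 1) * exp (-(r * (1 + u) * s)))) := fun s (hs : 0 < s) => by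
    rw [lintegral_ofReal_sub_gammaMeasure hs, ← lintegral_const_mul' _ _ ENNReal.ofReal_ne_top]
    refine setLIntegral_congr_fun measurableSet_Ioc fun u ⟨hu₀, hu₁⟩ => ?_
    have : 0 ≤ 1 - u := sub_nonneg.2 hu₁
    rw [← ENNReal.ofReal_mul' (by positivity)]
    congr 1
    have hr2 : r ^ (2 * a) = r ^ a * r ^ a := by rw [← rpow_add hr]; ring_nf
    have hs2 : s ^ (2 * a + 1 - 1) = s ^ (a - 1) * s ^ (a + 1) := by rw [← rpow_add hs]; ring_nf
    rw [hr2, hs2, show -(r * (1 + u) * s) = -(r * s) + -(r * s * u) by ring, exp_add]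
    field_simp
  have houter : ∀ u ∈ Ioc (0 : ℝ) 1,
      ∫⁻ s in Ioi 0, ENNReal.ofReal (r ^ (2 * a) / Gamma a ^ 2 * (u ^ (a - 1) * (1 - u)) *
          (s ^ (2 * a + 1 - 1) * exp (-(r * (1 + u) * s)))) =
        ENNReal.ofReal (Gamma (2 * a + 1) / (r * Gamma a ^ 2)) *
          ENNReal.ofReal (u ^ (a - 1) * (1 - u) * (1 + u) ^ (-(2 * a + 1))) :=
      fun u ⟨hu₀, hu₁⟩ => by
    have : 0 ≤ 1 - u := sub_nonneg.2 hu₁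
    simp_rw [ENNReal.ofReal_mul
      (by positivity : 0 ≤ r ^ (2 * a) / Gamma a ^ 2 * (u ^ (a - 1) * (1 - u)))]
    rw [lintegral_const_mul' _ _ ENNReal.ofReal_ne_top,
      lintegral_rpow_mul_exp_neg_mul_Ioi (by linarith) (by positivity),
      ← ENNReal.ofReal_mul (by positivity), ← ENNReal.ofReal_mul (by positivity)]
    have hu : 0 < 1 + u := by linarith
    congr 1
    rw [one_div, mul_inv, mul_rpow (by positivity) (by positivity), inv_rpow hr.le,
      inv_rpow hu.le, rpow_neg hu.le, rpow_add_one hr.ne']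
    field_simp
  have hmeas : Measurable fun s => ∫⁻ t, ENNReal.ofReal (s - t) ∂ν :=
    Measurable.lintegral_prod_right' (f := fun z : ℝ × ℝ => ENNReal.ofReal (z.1 - z.2))
      (by fun_prop)
  rw [lintegral_prod _ (by fun_prop), lintegral_gammaMeasure hmeas,
    setLIntegral_congr_fun measurableSet_Ioi hinner, lintegral_lintegral_swap (by fun_prop),
    setLIntegral_congr_fun measurableSet_Ioc houter,
    lintegral_const_mul' _ _ ENNReal.ofReal_ne_top,
    lintegral_rpow_mul_one_sub_mul_one_add_rpow ha, ← ENNReal.ofReal_mul (by positivity)]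
  congr 1
  rw [div_mul_div_comm, div_eq_div_iff (by positivity) (by positivity)]
  linear_combination r * Gamma a * Gamma_two_mul_add_one_mul_two_rpow ha.ne'

lemma ae_nonneg_gammaMeasure {a r : ℝ} : ∀ᵐ x ∂gammaMeasure a r, 0 ≤ x := by
  rw [ae_iff, show {x : ℝ | ¬0 ≤ x} = Iio 0 by ext; simp, gammaMeasure,
    withDensity_apply _ measurableSet_Iio, lintegral_gammaPDF_of_nonpos le_rfl]

lemma integral_max_gammaMeasure_prod {a r : ℝ} (ha : 0 < a) (hr : 0 < r) :
    ∫ z, max z.1 z.2 ∂(gammaMeasure a r).prod (gammaMeasure a r) =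
      a / r + Gamma (a + 1 / 2) / (r * √π * Gamma a) := by
  set ν := gammaMeasure a r
  have : IsProbabilityMeasure ν := isProbabilityMeasure_gammaMeasure ha hr
  have hsnd : ∀ᵐ z ∂ν.prod ν, 0 ≤ z.2 :=
    Measure.quasiMeasurePreserving_snd.ae ae_nonneg_gammaMeasure
  have hsplit : ∀ᵐ z ∂ν.prod ν,
      ENNReal.ofReal (max z.1 z.2) = ENNReal.ofReal z.2 + ENNReal.ofReal (z.1 - z.2) := by
    filter_upwards [hsnd] with z hz
    rcases le_total z.1 z.2 with h | h
    · rw [max_eq_right h, ENNReal.ofReal_of_nonpos (sub_nonpos.2 h), add_zero]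
    · rw [max_eq_left h, ← ENNReal.ofReal_add hz (sub_nonneg.2 h), add_sub_cancel]
  rw [integral_eq_lintegral_of_nonneg_ae (hsnd.mono fun z hz => hz.trans (le_max_right _ _))
      (by fun_prop), lintegral_congr_ae hsplit, lintegral_add_left (by fun_prop),
    lintegral_prod _ (by fun_prop)]
  simp only [lintegral_const, measure_univ, mul_one]
  rw [lintegral_ofReal_gammaMeasure ha hr, lintegral_ofReal_sub_gammaMeasure_prod ha hr,
    ← ENNReal.ofReal_add (by positivity) (by positivity), ENNReal.toReal_ofReal (by positivity)]

/-- The bivariate Dirichlet D-norm generator constant: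
`m(α) = 1 + Γ(α + 1/2)/(√π Γ(α+1)) = 1 + 1/(α B(α, 1/2))`. -/
theorem bivariate_dirichlet_generator_constant (α : ℝ) (hα : 0 < α)
    {Ω : Type*} [MeasurableSpace Ω] (μ : Measure Ω) [IsProbabilityMeasure μ]
    (V₁ V₂ : Ω → ℝ) (hmeas₁ : Measurable V₁) (hmeas₂ : Measurable V₂)
    (hindep : IndepFun V₁ V₂ μ)
    (hgamma₁ : μ.map V₁ = gammaMeasure α 1)
    (hgamma₂ : μ.map V₂ = gammaMeasure α 1) :
    (1 / α) * ∫ ω, max (V₁ ω) (V₂ ω) ∂μ =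
        1 + Real.Gamma (α + 1 / 2) / (Real.sqrt Real.pi * Real.Gamma (α + 1)) ∧
      (1 / α) * ∫ ω, max (V₁ ω) (V₂ ω) ∂μ =
        1 + 1 / (α * ∫ u in (0:ℝ)..1, u ^ (α - 1) * (1 - u) ^ ((1:ℝ) / 2 - 1)) := by
  have hlaw : μ.map (fun ω => (V₁ ω, V₂ ω)) = (gammaMeasure α 1).prod (gammaMeasure α 1) := by
    rw [(indepFun_iff_map_prod_eq_prod_map_map hmeas₁.aemeasurable hmeas₂.aemeasurable).1 hindep,
      hgamma₁, hgamma₂]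
  have hmean : ∫ ω, max (V₁ ω) (V₂ ω) ∂μ = α + Gamma (α + 1 / 2) / (√π * Gamma α) := by
    rw [← integral_map (f := fun z : ℝ × ℝ => max z.1 z.2) (hmeas₁.prodMk hmeas₂).aemeasurable
      (by fun_prop), hlaw, integral_max_gammaMeasure_prod hα one_pos, div_one, one_mul]
  have hbeta : α * ∫ u in (0:ℝ)..1, u ^ (α - 1) * (1 - u) ^ ((1:ℝ) / 2 - 1) =
      √π * Gamma (α + 1) / Gamma (α + 1 / 2) := by
    rw [integral_rpow_mul_one_sub_rpow_eq_beta hα one_half_pos, beta, Gamma_one_half_eq,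
      Gamma_add_one hα.ne']
    ring
  have hGamma : 1 / α * (α + Gamma (α + 1 / 2) / (√π * Gamma α)) =
      1 + Gamma (α + 1 / 2) / (√π * Gamma (α + 1)) := by
    rw [Gamma_add_one hα.ne']
    field_simp
  rw [hmean, hbeta, one_div_div, hGamma]
  exact ⟨rfl, rfl⟩
end

section
/- Let V_{ij}, 1 ≤ i ≤ d, 1 ≤ j ≤ n, n ≥ 2, be an array of i.i.d. integrable real random variables. Then for any real numbers x_1,...,x_d: E(max_{1≤i≤d} x_i · (Σ_{j=1}^n V_{ij})/n) ≤ E(max_{1≤i≤d} x_i · (Σ_{j=1}^{n−1} V_{ij})/(n−1)). -/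
/-!
Averaging the `n` leave-one-out row means gives back the full row mean, so
`max_i xᵢ (mean of row i) ≤ (1/n) ∑_k max_i xᵢ (mean of row i without column k)`,
the maximum of a sum being at most the sum of the maxima. Since the entries are i.i.d., deleting
any column `k` leaves an array with the same joint law as the first `n - 1` columns, so each of
the `n` expectations on the right equals the expectation of the maximum over `n - 1` columns.
-/

open MeasureTheory ProbabilityTheory

lemma Fin.sum_sum_succAbove {M : Type*} [AddCommGroup M] {m : ℕ} (y : Fin (m + 1) → M) :
    ∑ k : Fin (m + 1), ∑ j, y (k.succAbove j) = m • ∑ k, y k := by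
  simp_rw [fun k => eq_sub_of_add_eq' (Fin.sum_univ_succAbove y k).symm]
  rw [Finset.sum_sub_distrib, Finset.sum_const, Finset.card_univ, Fintype.card_fin, succ_nsmul,
    add_sub_cancel_right]

lemma Real.iSup_sum_le_sum_iSup {ι κ : Type*} [Finite ι] (s : Finset κ) (f : κ → ι → ℝ) :
    ⨆ i, ∑ k ∈ s, f k i ≤ ∑ k ∈ s, ⨆ i, f k i := by
  rcases isEmpty_or_nonempty ι with hι | hι
  · simp
  · exact ciSup_le fun i => Finset.sum_le_sum fun k _ => le_ciSup (Finite.bddAbove_range _) i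

lemma iSup_mul_mean_le_mean_iSup_succAbove {ι : Type*} [Finite ι] {m : ℕ} (hm : m ≠ 0)
    (x : ι → ℝ) (y : ι → Fin (m + 1) → ℝ) :
    ⨆ i, x i * ((∑ j, y i j) / (m + 1)) ≤
      (∑ k : Fin (m + 1), ⨆ i, x i * ((∑ j, y i (k.succAbove j)) / m)) / (m + 1) := by
  have hm' : (m : ℝ) ≠ 0 := Nat.cast_ne_zero.mpr hm
  rw [le_div_iff₀ (by positivity), Real.iSup_mul_of_nonneg (by positivity)]
  calc ⨆ i, x i * ((∑ j, y i j) / (m + 1)) * (m + 1)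
      = ⨆ i, ∑ k : Fin (m + 1), x i * ((∑ j, y i (k.succAbove j)) / m) := by
        refine iSup_congr fun i => ?_
        rw [← Finset.mul_sum, ← Finset.sum_div, Fin.sum_sum_succAbove, nsmul_eq_mul]
        field_simp
    _ ≤ _ := Real.iSup_sum_le_sum_iSup _ _

namespace MeasureTheory

variable {Ω : Type*} [MeasurableSpace Ω] {μ : Measure Ω}

lemma integrable_iSup {ι : Type*} [Finite ι] {g : ι → Ω → ℝ} (hg : ∀ i, Integrable (g i) μ) :
    Integrable (fun ω => ⨆ i, g i ω) μ := by
  rcases isEmpty_or_nonempty ι with hι | hι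
  · simp
  obtain ⟨i₀⟩ := id hι
  have := Fintype.ofFinite ι
  refine Integrable.mono' (integrable_finsetSum Finset.univ fun i _ => (hg i).abs)
    (AEMeasurable.iSup fun i => (hg i).aemeasurable).aestronglyMeasurable
    (Filter.Eventually.of_forall fun ω => ?_)
  have hle : ∀ i, |g i ω| ≤ ∑ i, |g i ω| := fun i =>
    Finset.single_le_sum (f := fun i => |g i ω|) (fun i _ => abs_nonneg _) (Finset.mem_univ i)
  rw [Real.norm_eq_abs, abs_le]
  have hlow : -∑ i, |g i ω| ≤ g i₀ ω := (neg_le_neg (hle i₀)).trans (neg_abs_le _)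
  exact ⟨hlow.trans (le_ciSup (f := fun i => g i ω) (Finite.bddAbove_range _) i₀),
    ciSup_le fun i => (le_abs_self _).trans (hle i)⟩

end MeasureTheory

namespace ProbabilityTheory

variable {Ω ι : Type*} [MeasurableSpace Ω] {μ : Measure Ω}

lemma iIndepFun.identDistrib_comp_of_injective {β : Type*} [MeasurableSpace β] {X : ι → Ω → β}
    (hindep : iIndepFun X μ) (hX : ∀ i, AEMeasurable (X i) μ) {κ : Type*} [Fintype κ]
    {f g : κ → ι} (hf : f.Injective) (hg : g.Injective)
    (hfg : ∀ k, μ.map (X (f k)) = μ.map (X (g k))) :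
    IdentDistrib (fun ω k => X (f k) ω) (fun ω k => X (g k) ω) μ μ where
  aemeasurable_fst := aemeasurable_pi_lambda _ fun k => hX (f k)
  aemeasurable_snd := aemeasurable_pi_lambda _ fun k => hX (g k)
  map_eq := by
    rw [(hindep.precomp hf).map_fun_eq_pi_map (fun k => hX (f k)),
      (hindep.precomp hg).map_fun_eq_pi_map (fun k => hX (g k))]
    simp_rw [hfg]

/-- `max_i xᵢ · (mean of row i over the columns c 0, …, c (m - 1))` -/
noncomputable def maxWeightedMean {m : ℕ} (x : ι → ℝ) (V : ι → ℕ → Ω → ℝ) (c : Fin m → ℕ)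
    (ω : Ω) : ℝ :=
  ⨆ i, x i * ((∑ j, V i (c j) ω) / m)

variable {m : ℕ} {x : ι → ℝ} {V : ι → ℕ → Ω → ℝ}

lemma integrable_maxWeightedMean [Finite ι] (hint : ∀ i j, Integrable (V i j) μ) (c : Fin m → ℕ) :
    Integrable (maxWeightedMean x V c) μ :=
  integrable_iSup fun i =>
    ((integrable_finsetSum _ fun j _ => hint i (c j)).div_const _).const_mul _

lemma integral_maxWeightedMean_eq [Fintype ι] (hindep : iIndepFun (fun p : ι × ℕ => V p.1 p.2) μ)
    (hV : ∀ i j, AEMeasurable (V i j) μ) (hident : ∀ i j j', μ.map (V i j) = μ.map (V i j'))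
    {c c' : Fin m → ℕ} (hc : c.Injective) (hc' : c'.Injective) :
    ∫ ω, maxWeightedMean x V c ω ∂μ = ∫ ω, maxWeightedMean x V c' ω ∂μ := by
  have hG : Measurable fun y : ι × Fin m → ℝ => ⨆ i, x i * ((∑ j, y (i, j)) / m) := by
    fun_prop
  exact ((hindep.identDistrib_comp_of_injective (fun p => hV p.1 p.2)
    (Function.injective_id.prodMap hc) (Function.injective_id.prodMap hc')
    fun _ => hident _ _ _).comp hG).integral_eq

end ProbabilityTheory

theorem expected_max_of_averages_decreasing_general (d : ℕ) (n : ℕ)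
    (hn : 2 ≤ n)
    {Ω : Type*} [MeasurableSpace Ω] (μ : Measure Ω)
    (V : Fin d → ℕ → Ω → ℝ)
    (hindep : iIndepFun
      (fun p : Fin d × ℕ => V p.1 p.2) μ)
    (hident : ∀ i j i' j', μ.map (V i j) = μ.map (V i' j'))
    (hint : ∀ i j, Integrable (V i j) μ)
    (x : Fin d → ℝ) :
    ∫ ω, ⨆ i, x i * ((∑ j ∈ Finset.range n, V i j ω) / n) ∂μ ≤
      ∫ ω, ⨆ i, x i * ((∑ j ∈ Finset.range (n - 1), V i j ω) / (n - 1)) ∂μ := by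
  obtain ⟨m, rfl⟩ : ∃ m, n = m + 1 := ⟨n - 1, by omega⟩
  have le_mean_succAbove (ω : Ω) :
      ⨆ i, x i * ((∑ j ∈ Finset.range (m + 1), V i j ω) / ↑(m + 1)) ≤
        (∑ k : Fin (m + 1), maxWeightedMean x V (fun j => k.succAbove j) ω) / (m + 1) := by
    simpa [maxWeightedMean, Finset.sum_range] using
      iSup_mul_mean_le_mean_iSup_succAbove (by omega) x fun i j => V i j ω
  have eq_val : (fun ω => ⨆ i, x i * ((∑ j ∈ Finset.range (m + 1 - 1), V i j ω) /
      (↑(m + 1) - 1))) = maxWeightedMean x V (Fin.val : Fin m → ℕ) := by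
    funext ω
    simp [maxWeightedMean, Finset.sum_range]
  have integral_succAbove (k : Fin (m + 1)) :
      ∫ ω, maxWeightedMean x V (fun j => k.succAbove j) ω ∂μ =
        ∫ ω, maxWeightedMean x V Fin.val ω ∂μ :=
    integral_maxWeightedMean_eq hindep (fun i j => (hint i j).aemeasurable)
      (fun _ _ _ => hident _ _ _ _) (Fin.val_injective.comp Fin.succAbove_right_injective)
      Fin.val_injective
  rw [eq_val]
  calc _ ≤ ∫ ω, (∑ k : Fin (m + 1), maxWeightedMean x V (fun j => k.succAbove j) ω) / (m + 1) ∂μ :=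
        integral_mono
          (integrable_iSup fun i =>
            ((integrable_finsetSum _ fun j _ => hint i j).div_const _).const_mul _)
          ((integrable_finsetSum _ fun k _ => integrable_maxWeightedMean hint _).div_const _)
          le_mean_succAbove
    _ = ∫ ω, maxWeightedMean x V Fin.val ω ∂μ := by
        rw [integral_div, integral_finsetSum _ fun k _ => integrable_maxWeightedMean hint _]
        simp_rw [integral_succAbove, Finset.sum_const, Finset.card_univ, Fintype.card_fin,
          nsmul_eq_mul]
        push_cast
        field_simp

/-- For an i.i.d. integrable array `V_{ij}`, the expected maximum of the
row averages is decreasing in the number `n` of averaged columns: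
`E(max_i xᵢ (∑_{j<n} V_{ij})/n) ≤ E(max_i xᵢ (∑_{j<n-1} V_{ij})/(n-1))`. -/
theorem expected_max_of_averages_decreasing (d : ℕ) (hd : 0 < d) (n : ℕ)
    (hn : 2 ≤ n)
    {Ω : Type*} [MeasurableSpace Ω] (μ : Measure Ω) [IsProbabilityMeasure μ]
    (V : Fin d → ℕ → Ω → ℝ)
    (hmeas : ∀ i j, Measurable (V i j))
    (hindep : iIndepFun
      (fun p : Fin d × ℕ => V p.1 p.2) μ)
    (hident : ∀ i j i' j', μ.map (V i j) = μ.map (V i' j'))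
    (hint : ∀ i j, Integrable (V i j) μ)
    (x : Fin d → ℝ) :
    ∫ ω, ⨆ i, x i * ((∑ j ∈ Finset.range n, V i j ω) / n) ∂μ ≤
      ∫ ω, ⨆ i, x i * ((∑ j ∈ Finset.range (n - 1), V i j ω) / (n - 1)) ∂μ :=
  expected_max_of_averages_decreasing_general d n hn μ V hindep hident hint x
end
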